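/- If Y is a compact Hausdorff I-favorable topological space, then the hyperspace exp(Y) of nonempty closed subsets of Y with the Vietoris topology is I-favorable. -/

import Mathlib

/-- A topological space is I-favorable if Player I has a winning strategy in the open-open
game: a function `σ` assigning to each finite sequence of nonempty open sets a nonempty open
set, such that whenever the nonempty open sets `V n` satisfy `V n ⊆ σ (V 0, …, V (n-1))` for
all `n`, the union `⋃ n, V n` is dense. -/
def IFavorable (X : Type*) [TopologicalSpace X] : Prop :=
  ∃ σ : List {U : Set X // IsOpen U ∧ U.Nonempty} → {U : Set X // IsOpen U ∧ U.Nonempty},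
    ∀ V : ℕ → {U : Set X // IsOpen U ∧ U.Nonempty},
      (∀ n, (V n : Set X) ⊆ (σ (List.ofFn fun i : Fin n => V i) : Set X)) →
      Dense (⋃ n, (V n : Set X))

/-- The hyperspace `exp Y` of nonempty closed subsets of `Y`. -/
def HyperSpace (Y : Type*) [TopologicalSpace Y] : Type _ :=
  {F : Set Y // IsClosed F ∧ F.Nonempty}

/-- The Vietoris topology on the hyperspace of nonempty closed subsets, generated by the
sets `{F : F ⊆ U}` and `{F : F ∩ U ≠ ∅}` for `U` open. -/
def vietorisTopology (Y : Type*) [TopologicalSpace Y] : TopologicalSpace (HyperSpace Y) :=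
  TopologicalSpace.generateFrom
    ({S | ∃ U : Set Y, IsOpen U ∧ S = {F : HyperSpace Y | F.1 ⊆ U}} ∪
     {S | ∃ U : Set Y, IsOpen U ∧ S = {F : HyperSpace Y | (F.1 ∩ U).Nonempty}})

/-!
Let `σ` be a winning strategy of Player I on `Y`. In the hyperspace, Player I keeps a growing record
of finite `σ`-plays, starting with the empty one. At each stage a finite tuple `p₁, …, pₖ` of
recorded plays is scheduled (every tuple recurs infinitely often), and I answers with the Vietoris
basic set `⟨σ p₁, …, σ pₖ⟩`. Inside II's reply, I picks a basic set `⟨e₁, …, eₘ⟩` whose pieces each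
lie in some `σ pⱼ` and serve every `j`, and records all the extended plays `pⱼ ++ [eᵢ]`.

Suppose II's replies all miss a basic set `⟨L₁, …, Lₖ⟩`, and take recorded plays `pⱼ` whose moves
miss `Lⱼ`. When this tuple is scheduled, some piece `eᵢ ⊆ σ pⱼ` misses `Lⱼ`: otherwise a point of
each `eᵢ ∩ Lⱼ` gives a finite closed set lying in both basic sets. So one of the plays can be
extended while still missing its `Lⱼ`. Iterating and applying the pigeonhole principle to `j`
produces an infinite `σ`-play avoiding the nonempty open set `Lⱼ`, which contradicts that `σ` wins.
-/

open Set

instance {Y : Type*} [TopologicalSpace Y] : TopologicalSpace (HyperSpace Y) := vietorisTopology Y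

abbrev NonemptyOpen (X : Type*) [TopologicalSpace X] := {U : Set X // IsOpen U ∧ U.Nonempty}

theorem List.exists_pairs_of_forall_exists {α β : Type*} {R : α → β → Prop} :
    ∀ {Q : List α}, (∀ a ∈ Q, ∃ b, R a b) →
      ∃ E : List (α × β), (∀ p ∈ E, p.1 ∈ Q ∧ R p.1 p.2) ∧ ∀ a ∈ Q, ∃ b, (a, b) ∈ E
  | [], _ => ⟨[], by simp⟩
  | a :: Q, h => by
    obtain ⟨b, hb⟩ := h a List.mem_cons_self
    obtain ⟨E, hE, hcover⟩ := exists_pairs_of_forall_exists fun a' ha' => h a' (.tail a ha')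
    refine ⟨(a, b) :: E, fun p hp => ?_, fun a' ha' => ?_⟩
    · rcases List.mem_cons.1 hp with rfl | hp
      exacts [⟨List.mem_cons_self, hb⟩, ⟨.tail a (hE p hp).1, (hE p hp).2⟩]
    · rcases List.mem_cons.1 ha' with rfl | ha'
      exacts [⟨b, List.mem_cons_self⟩, (hcover a' ha').imp fun _ => .tail _]

theorem List.exists_seq_ofFn_prefix_of_prefix_chain {α : Type*} {l : ℕ → List α}
    (hmono : ∀ k, l k <+: l (k + 1)) (hinf : {k | l k ≠ l (k + 1)}.Infinite) :
    ∃ v : ℕ → α, ∀ n, ∃ k, List.ofFn (fun i : Fin n => v i) <+: l k := by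
  have hle {j k : ℕ} (h : j ≤ k) : l j <+: l k := by
    induction h with
    | refl => exact List.prefix_rfl
    | step _ ih => exact ih.trans (hmono _)
  have hlen (n : ℕ) : ∃ k, n ≤ (l k).length := by
    induction n with
    | zero => exact ⟨0, Nat.zero_le _⟩
    | succ n ih =>
      obtain ⟨k, hk⟩ := ih
      obtain ⟨k', hk', hkk'⟩ := hinf.exists_gt k
      have hlt : (l k').length < (l (k' + 1)).length :=
        lt_of_le_of_ne (hmono k').length_le fun h => hk' ((hmono k').eq_of_length h)
      exact ⟨k' + 1, hk.trans_lt ((hle hkk'.le).length_le.trans_lt hlt)⟩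
  choose K hK using fun n => hlen (n + 1)
  refine ⟨fun i => (l (K i))[i]'(hK i), fun n => ⟨K n, ?_⟩⟩
  have hK' : n ≤ (l (K n)).length := (Nat.le_succ n).trans (hK n)
  convert (l (K n)).take_prefix n
  refine List.ext_getElem (by simp [hK']) fun i h₁ h₂ => ?_
  simp only [List.getElem_ofFn, List.getElem_take]
  rcases le_total (K i) (K n) with h | h
  · exact (hle h).getElem _
  · exact ((hle h).getElem _).symm

theorem exists_seq_ofFn_prefix_of_forall_exists_concat {ι α : Type*} [Finite ι]
    {S : ι → Set (List α)} (hnil : ∀ i, [] ∈ S i)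
    (hstep : ∀ q : ι → List α, (∀ i, q i ∈ S i) → ∃ i a, q i ++ [a] ∈ S i) :
    ∃ i, ∃ v : ℕ → α, ∀ n, ∃ l ∈ S i, List.ofFn (fun k : Fin n => v k) <+: l := by
  classical
  choose j a ha using fun q : {q : ι → List α // ∀ i, q i ∈ S i} => hstep q.1 q.2
  let next (q : {q : ι → List α // ∀ i, q i ∈ S i}) : {q : ι → List α // ∀ i, q i ∈ S i} :=
    ⟨Function.update q.1 (j q) (q.1 (j q) ++ [a q]),
      (Function.forall_update_iff _ fun i l => l ∈ S i).2 ⟨ha q, fun i _ => q.2 i⟩⟩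
  let c (k : ℕ) := next^[k] ⟨fun _ => [], hnil⟩
  have hc (k : ℕ) (i : ι) : (c (k + 1)).1 i =
      if j (c k) = i then (c k).1 i ++ [a (c k)] else (c k).1 i := by
    rw [show c (k + 1) = next (c k) from Function.iterate_succ_apply' ..]
    by_cases h : j (c k) = i
    · subst h; simp [next]
    · simp [next, h, Function.update_of_ne (Ne.symm h)]
  obtain ⟨i, hi⟩ := Finite.exists_infinite_fiber fun k => j (c k)
  obtain ⟨v, hv⟩ := List.exists_seq_ofFn_prefix_of_prefix_chain (l := fun k => (c k).1 i)
    (fun k => by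
      rw [hc]
      split_ifs
      exacts [List.prefix_append _ _, List.prefix_rfl])
    ((Set.infinite_coe_iff.1 hi).mono fun k (hk : j (c k) = i) => by simp [hc, hk])
  exact ⟨i, v, fun n => let ⟨k, hk⟩ := hv n; ⟨_, (c k).2 i, hk⟩⟩

namespace HyperSpace

variable {Y : Type*} [TopologicalSpace Y]

def vietorisBasic (L : List (Set Y)) : Set (HyperSpace Y) :=
  {F | F.1 ⊆ ⋃ U ∈ L, U ∧ ∀ U ∈ L, (F.1 ∩ U).Nonempty}

theorem isOpen_vietorisBasic {L : List (Set Y)} (hL : ∀ U ∈ L, IsOpen U) :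
    IsOpen (vietorisBasic L) := by
  have hsub : IsOpen {F : HyperSpace Y | F.1 ⊆ ⋃ U ∈ L, U} :=
    .basic _ (.inl ⟨_, isOpen_biUnion hL, rfl⟩)
  have hmeet : IsOpen (⋂ U ∈ {U | U ∈ L}, {F : HyperSpace Y | (F.1 ∩ U).Nonempty}) :=
    L.finite_toSet.isOpen_biInter fun U hU => .basic _ (.inr ⟨U, hL U hU, rfl⟩)
  convert hsub.inter hmeet using 1
  ext F
  simp [vietorisBasic]

theorem ne_nil_of_mem_vietorisBasic {L : List (Set Y)} {F : HyperSpace Y}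
    (hF : F ∈ vietorisBasic L) : L ≠ [] := by
  rintro rfl
  obtain ⟨x, hx⟩ := F.2.2
  simpa using hF.1 hx

theorem mem_vietorisBasic_map_inter {L : List (Set Y)} {V : Set Y} {F : HyperSpace Y}
    (hF : F ∈ vietorisBasic L) (hFV : F.1 ⊆ V) : F ∈ vietorisBasic (L.map (· ∩ V)) := by
  refine ⟨fun x hx => ?_, fun U' hU' => ?_⟩
  · obtain ⟨U, hU, hxU⟩ := mem_iUnion₂.1 (hF.1 hx)
    exact mem_iUnion₂.2 ⟨U ∩ V, List.mem_map_of_mem hU, hxU, hFV hx⟩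
  · obtain ⟨U, hU, rfl⟩ := List.mem_map.1 hU'
    obtain ⟨x, hxF, hxU⟩ := hF.2 U hU
    exact ⟨x, hxF, hxU, hFV hxF⟩

theorem vietorisBasic_subset_vietorisBasic {L L' : List (Set Y)}
    (hsub : ∀ U ∈ L, U ⊆ ⋃ U' ∈ L', U') (hmeet : ∀ U' ∈ L', ∃ U ∈ L, U ⊆ U') :
    vietorisBasic L ⊆ vietorisBasic L' := by
  refine fun F hF => ⟨fun x hx => ?_, fun U' hU' => ?_⟩
  · obtain ⟨U, hU, hxU⟩ := mem_iUnion₂.1 (hF.1 hx)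
    exact hsub U hU hxU
  · obtain ⟨U, hU, hUU'⟩ := hmeet U' hU'
    exact (hF.2 U hU).mono (inter_subset_inter_right _ hUU')

theorem exists_vietorisBasic_subset {O : Set (HyperSpace Y)} (hO : IsOpen O) {F : HyperSpace Y}
    (hF : F ∈ O) : ∃ L : List (Set Y), (∀ U ∈ L, IsOpen U) ∧ F ∈ vietorisBasic L ∧
      vietorisBasic L ⊆ O := by
  induction hO generalizing F with
  | basic O hO =>
    rcases hO with ⟨U, hU, rfl⟩ | ⟨U, hU, rfl⟩
    · refine ⟨[U], by simpa using hU, ⟨by simpa using hF, ?_⟩, fun G hG => by simpa using hG.1⟩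
      simpa [inter_eq_left.2 hF] using F.2.2
    · refine ⟨[univ, U], by simpa using hU, ⟨by simp, by simpa using ⟨F.2.2, hF⟩⟩, ?_⟩
      exact fun G hG => hG.2 U (by simp)
  | univ => exact ⟨[univ], by simp, ⟨by simp, by simpa using F.2.2⟩, subset_univ _⟩
  | inter O₁ O₂ _ _ ih₁ ih₂ =>
    obtain ⟨L₁, hL₁o, hF₁, hL₁O⟩ := ih₁ hF.1
    obtain ⟨L₂, hL₂o, hF₂, hL₂O⟩ := ih₂ hF.2
    set V := (⋃ U ∈ L₁, U) ∩ ⋃ U ∈ L₂, U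
    have hrefine {L : List (Set Y)} (hL : ∀ U ∈ L, U ∈ L₁ ++ L₂) (hV : V ⊆ ⋃ U ∈ L, U) :
        vietorisBasic ((L₁ ++ L₂).map (· ∩ V)) ⊆ vietorisBasic L :=
      vietorisBasic_subset_vietorisBasic
        (List.forall_mem_map.2 fun _ _ => inter_subset_right.trans hV)
        fun U hU => ⟨U ∩ V, List.mem_map_of_mem (hL U hU), inter_subset_left⟩
    refine ⟨(L₁ ++ L₂).map (· ∩ V), List.forall_mem_map.2 fun U hU => ?_, ?_, fun G hG =>
      ⟨hL₁O (hrefine (fun _ => List.mem_append_left _) inter_subset_left hG),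
        hL₂O (hrefine (fun _ => List.mem_append_right _) inter_subset_right hG)⟩⟩
    · exact ((List.mem_append.1 hU).elim (hL₁o U) (hL₂o U)).inter
        ((isOpen_biUnion hL₁o).inter (isOpen_biUnion hL₂o))
    · refine mem_vietorisBasic_map_inter ⟨fun x hx => ?_, fun U hU => ?_⟩
        (subset_inter hF₁.1 hF₂.1)
      · obtain ⟨U, hU, hxU⟩ := mem_iUnion₂.1 (hF₁.1 hx)
        exact mem_iUnion₂.2 ⟨U, List.mem_append_left _ hU, hxU⟩
      · exact (List.mem_append.1 hU).elim (hF₁.2 U) (hF₂.2 U)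
  | sUnion S _ ih =>
    obtain ⟨O, hOS, hFO⟩ := hF
    obtain ⟨L, hLo, hFL, hLO⟩ := ih O hOS hFO
    exact ⟨L, hLo, hFL, hLO.trans (subset_sUnion_of_mem hOS)⟩

theorem exists_vietorisBasic_refinement {α : Type*} {Q : List α} {G : α → Set Y}
    (hG : ∀ a ∈ Q, IsOpen (G a)) {W : Set (HyperSpace Y)} (hW : IsOpen W) (hWne : W.Nonempty)
    (hWG : W ⊆ vietorisBasic (Q.map G)) :
    ∃ E : List (α × NonemptyOpen Y), (∀ p ∈ E, p.1 ∈ Q ∧ (p.2 : Set Y) ⊆ G p.1) ∧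
      (∀ a ∈ Q, ∃ e, (a, e) ∈ E) ∧ vietorisBasic (E.map fun p => (p.2 : Set Y)) ⊆ W := by
  obtain ⟨F, hF⟩ := hWne
  obtain ⟨D, hDo, hFD, hDW⟩ := exists_vietorisBasic_subset hW hF
  have hFG := hWG hF
  set V := ⋃ A ∈ D, A
  -- `E₁` serves every `a ∈ Q` inside `V`, `E₂` puts a piece inside every `A ∈ D`.
  obtain ⟨E₁, hE₁, hcover⟩ := List.exists_pairs_of_forall_exists
    (R := fun a (e : NonemptyOpen Y) => (e : Set Y) ⊆ G a ∩ V) (Q := Q) fun a ha => by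
      obtain ⟨x, hxF, hxG⟩ := hFG.2 (G a) (List.mem_map_of_mem ha)
      exact ⟨⟨G a ∩ V, (hG a ha).inter (isOpen_biUnion hDo), x, hxG, hFD.1 hxF⟩, subset_rfl⟩
  obtain ⟨E₂, hE₂, hhit⟩ := List.exists_pairs_of_forall_exists
    (R := fun A (p : α × NonemptyOpen Y) => p.1 ∈ Q ∧ (p.2 : Set Y) ⊆ G p.1 ∩ A) (Q := D)
    fun A hA => by
      obtain ⟨x, hxF, hxA⟩ := hFD.2 A hA
      obtain ⟨_, hU, hxG⟩ := mem_iUnion₂.1 (hFG.1 hxF)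
      obtain ⟨a, ha, rfl⟩ := List.mem_map.1 hU
      exact ⟨(a, ⟨G a ∩ A, (hG a ha).inter (hDo A hA), x, hxG, hxA⟩), ha, subset_rfl⟩
  refine ⟨E₁ ++ E₂.map Prod.snd, fun p hp => ?_, fun a ha => ?_, ?_⟩
  · rcases List.mem_append.1 hp with hp | hp
    · exact ⟨(hE₁ p hp).1, (hE₁ p hp).2.trans inter_subset_left⟩
    · obtain ⟨r, hr, rfl⟩ := List.mem_map.1 hp
      exact ⟨(hE₂ r hr).2.1, (hE₂ r hr).2.2.trans inter_subset_left⟩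
  · exact (hcover a ha).imp fun e he => List.mem_append_left _ he
  · refine (vietorisBasic_subset_vietorisBasic ?_ fun A hA => ?_).trans hDW
    · simp only [List.mem_map, List.mem_append]
      rintro _ ⟨p, hp | ⟨r, hr, rfl⟩, rfl⟩
      · exact (hE₁ p hp).2.trans inter_subset_right
      · exact (hE₂ r hr).2.2.trans (inter_subset_right.trans
          fun x hx => mem_iUnion₂.2 ⟨_, (hE₂ r hr).1, hx⟩)
    · obtain ⟨p, hp⟩ := hhit A hA
      exact ⟨_, List.mem_map_of_mem (List.mem_append_right _ (List.mem_map_of_mem hp)),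
        (hE₂ _ hp).2.2.trans inter_subset_right⟩

def ofRange [T1Space Y] {ι : Type*} [Finite ι] [Nonempty ι] (x : ι → Y) : HyperSpace Y :=
  ⟨range x, (finite_range x).isClosed, range_nonempty x⟩

theorem ofRange_mem_vietorisBasic [T1Space Y] {ι : Type*} [Finite ι] [Nonempty ι] {x : ι → Y}
    {L : List (Set Y)} (hsub : ∀ i, ∃ U ∈ L, x i ∈ U) (hmeet : ∀ U ∈ L, ∃ i, x i ∈ U) :
    ofRange x ∈ vietorisBasic L := by
  refine ⟨?_, fun U hU => ?_⟩
  · rintro _ ⟨i, rfl⟩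
    simpa using hsub i
  · obtain ⟨i, hi⟩ := hmeet U hU
    exact ⟨x i, mem_range_self i, hi⟩

theorem vietorisBasic_nonempty [T1Space Y] {L : List (Set Y)} (hL : L ≠ [])
    (hne : ∀ U ∈ L, U.Nonempty) : (vietorisBasic L).Nonempty := by
  choose x hx using fun U : {U // U ∈ L} => hne U.1 U.2
  have : Nonempty {U // U ∈ L} := let ⟨U, hU⟩ := List.exists_mem_of_ne_nil L hL; ⟨⟨U, hU⟩⟩
  exact ⟨ofRange x, ofRange_mem_vietorisBasic (fun U => ⟨U.1, U.2, hx U⟩)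
    fun U hU => ⟨⟨U, hU⟩, hx ⟨U, hU⟩⟩⟩

theorem exists_disjoint_of_disjoint_vietorisBasic [T1Space Y] {α : Type*} {L : List (Set Y)}
    (hL : L ≠ []) (q : {U // U ∈ L} → α) {E : List (α × NonemptyOpen Y)}
    (hlabel : ∀ p ∈ E, ∃ U, q U = p.1) (hcover : ∀ U, ∃ e, (q U, e) ∈ E)
    (hdisj : Disjoint (vietorisBasic (E.map fun p => (p.2 : Set Y))) (vietorisBasic L)) :
    ∃ U e, (q U, e) ∈ E ∧ Disjoint (e : Set Y) U := by
  classical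
  by_contra! hmeet
  let T := {t : {U // U ∈ L} × {p // p ∈ E} // q t.1 = t.2.1.1}
  have hT (t : T) : ((t.1.2.1.2 : Set Y) ∩ t.1.1).Nonempty := by
    obtain ⟨⟨U, ⟨a, e⟩, hp⟩, rfl : q U = a⟩ := t
    exact not_disjoint_iff_nonempty_inter.1 (hmeet U e hp)
  choose x hx using hT
  obtain ⟨U₀, hU₀⟩ := List.exists_mem_of_ne_nil L hL
  obtain ⟨e₀, he₀⟩ := hcover ⟨U₀, hU₀⟩
  have : Finite T := Subtype.finite
  have : Nonempty T := ⟨⟨(⟨U₀, hU₀⟩, ⟨_, he₀⟩), rfl⟩⟩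
  refine hdisj.ne_of_mem (ofRange_mem_vietorisBasic (x := x) ?_ ?_)
    (ofRange_mem_vietorisBasic ?_ ?_) rfl
  · exact fun t => ⟨_, List.mem_map_of_mem t.1.2.2, (hx t).1⟩
  · simp only [List.mem_map]
    rintro _ ⟨p, hp, rfl⟩
    obtain ⟨U, hU⟩ := hlabel p hp
    exact ⟨⟨(U, ⟨p, hp⟩), hU⟩, (hx ⟨(U, ⟨p, hp⟩), hU⟩).1⟩
  · exact fun t => ⟨_, t.1.1.2, (hx t).2⟩
  · intro U hU
    obtain ⟨e, he⟩ := hcover ⟨U, hU⟩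
    exact ⟨_, (hx ⟨(⟨U, hU⟩, ⟨_, he⟩), rfl⟩).2⟩

end HyperSpace

namespace OpenOpenGame

open HyperSpace

variable {X Y : Type*} [TopologicalSpace X] [TopologicalSpace Y]

def IsWinningStrategy (σ : List (NonemptyOpen X) → NonemptyOpen X) : Prop :=
  ∀ V : ℕ → NonemptyOpen X, (∀ n, (V n : Set X) ⊆ (σ (List.ofFn fun i : Fin n => V i) : Set X)) →
    Dense (⋃ n, (V n : Set X))

def IsPlay (σ : List (NonemptyOpen X) → NonemptyOpen X) (l : List (NonemptyOpen X)) : Prop :=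
  ∀ (l' : List (NonemptyOpen X)) (e : NonemptyOpen X), l' ++ [e] <+: l → (e : Set X) ⊆ σ l'

section IsPlay

variable {σ : List (NonemptyOpen X) → NonemptyOpen X}

theorem isPlay_nil : IsPlay σ [] := fun l' e h => by simpa using h.length_le

theorem IsPlay.concat {l : List (NonemptyOpen X)} (hl : IsPlay σ l) {e : NonemptyOpen X}
    (he : (e : Set X) ⊆ σ l) : IsPlay σ (l ++ [e]) := by
  intro l' e' h
  rcases List.prefix_concat_iff.1 h with h | h
  · obtain ⟨rfl, he'⟩ := List.append_inj' h rfl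
    rwa [List.singleton_inj.1 he']
  · exact hl l' e' h

theorem IsPlay.ofFn_subset {l : List (NonemptyOpen X)} (hl : IsPlay σ l) {v : ℕ → NonemptyOpen X}
    {n : ℕ} (h : List.ofFn (fun i : Fin (n + 1) => v i) <+: l) :
    (v n : Set X) ⊆ σ (List.ofFn fun i : Fin n => v i) :=
  hl _ _ (by
    simpa only [List.ofFn_succ', List.concat_eq_append, Fin.val_castSucc, Fin.val_last] using h)

end IsPlay

/-- Every nonempty list occurs infinitely often; the empty list would make Player I's move empty,
so it is replaced by `[0]`. -/
def schedule (n : ℕ) : List ℕ :=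
  if (Denumerable.ofNat (ℕ × List ℕ) n).2 = [] then [0] else (Denumerable.ofNat (ℕ × List ℕ) n).2

theorem schedule_ne_nil (n : ℕ) : schedule n ≠ [] := by
  unfold schedule
  split_ifs with h
  exacts [List.cons_ne_nil _ _, h]

theorem exists_schedule_eq {l : List ℕ} (hl : l ≠ []) (N : ℕ) :
    ∃ n, N ≤ n ∧ schedule n = l := by
  have hinf : {n | schedule n = l}.Infinite := by
    refine Set.infinite_of_injective_forall_mem (f := fun k : ℕ => Encodable.encode (k, l))
      (fun k k' h => (Prod.mk.inj (Encodable.encode_injective h)).1) fun k => ?_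
    simp [schedule, hl]
  obtain ⟨n, hn, hNn⟩ := hinf.exists_gt N
  exact ⟨n, hNn.le, hn⟩

structure State (Y : Type*) [TopologicalSpace Y] where
  plays : List (List (NonemptyOpen Y))
  stage : ℕ

namespace State

variable (σ : List (NonemptyOpen Y) → NonemptyOpen Y)

def init : State Y := ⟨[[]], 0⟩

def slots (s : State Y) : List (List (NonemptyOpen Y)) :=
  (schedule s.stage).map (s.plays.getD · [])

def target (s : State Y) : Set (HyperSpace Y) :=
  vietorisBasic (s.slots.map fun l => (σ l : Set Y))

def move [T1Space Y] (s : State Y) : NonemptyOpen (HyperSpace Y) :=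
  ⟨s.target σ, isOpen_vietorisBasic (List.forall_mem_map.2 fun l _ => (σ l).2.1),
    vietorisBasic_nonempty (by simpa [slots] using schedule_ne_nil s.stage)
      (List.forall_mem_map.2 fun l _ => (σ l).2.2)⟩

open Classical in
noncomputable def pieces (s : State Y) (W : NonemptyOpen (HyperSpace Y)) :
    List (List (NonemptyOpen Y) × NonemptyOpen Y) :=
  if h : W.1 ⊆ s.target σ then
    (exists_vietorisBasic_refinement (fun l _ => (σ l).2.1) W.2.1 W.2.2 h).choose
  else []

theorem pieces_spec (s : State Y) (W : NonemptyOpen (HyperSpace Y)) :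
    ∀ p ∈ s.pieces σ W, p.1 ∈ s.slots ∧ (p.2 : Set Y) ⊆ σ p.1 := by
  unfold pieces
  split_ifs with h
  · exact (exists_vietorisBasic_refinement (fun l _ => (σ l).2.1) W.2.1 W.2.2 h).choose_spec.1
  · simp

theorem pieces_spec_of_subset (s : State Y) {W : NonemptyOpen (HyperSpace Y)}
    (h : W.1 ⊆ s.target σ) :
    (∀ l ∈ s.slots, ∃ e, (l, e) ∈ s.pieces σ W) ∧
      vietorisBasic ((s.pieces σ W).map fun p => (p.2 : Set Y)) ⊆ W.1 := by
  unfold pieces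
  rw [dif_pos h]
  exact (exists_vietorisBasic_refinement (fun l _ => (σ l).2.1) W.2.1 W.2.2 h).choose_spec.2

noncomputable def next (s : State Y) (W : NonemptyOpen (HyperSpace Y)) : State Y :=
  ⟨s.plays ++ (s.pieces σ W).map fun p => p.1 ++ [p.2], s.stage + 1⟩

end State

variable (σ : List (NonemptyOpen Y) → NonemptyOpen Y)

noncomputable def strategy [T1Space Y] (h : List (NonemptyOpen (HyperSpace Y))) :
    NonemptyOpen (HyperSpace Y) :=
  (h.foldl (State.next σ) .init).move σ

noncomputable def stateAt (W : ℕ → NonemptyOpen (HyperSpace Y)) (n : ℕ) : State Y :=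
  (List.ofFn fun i : Fin n => W i).foldl (State.next σ) .init

variable (W : ℕ → NonemptyOpen (HyperSpace Y))

theorem stateAt_succ (n : ℕ) : stateAt σ W (n + 1) = (stateAt σ W n).next σ (W n) := by
  simp only [stateAt, List.ofFn_succ', List.concat_eq_append, List.foldl_concat,
    Fin.val_castSucc, Fin.val_last]

theorem stage_stateAt (n : ℕ) : (stateAt σ W n).stage = n := by
  induction n with
  | zero => rfl
  | succ n ih => rw [stateAt_succ, State.next, ih]

theorem plays_stateAt_prefix {m n : ℕ} (h : m ≤ n) :
    (stateAt σ W m).plays <+: (stateAt σ W n).plays := by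
  induction h with
  | refl => exact List.prefix_rfl
  | step _ ih => exact ih.trans (by rw [stateAt_succ]; exact List.prefix_append _ _)

theorem isPlay_of_mem_plays {n : ℕ} {l : List (NonemptyOpen Y)}
    (hl : l ∈ (stateAt σ W n).plays) : IsPlay σ l := by
  induction n generalizing l with
  | zero => simp_all [stateAt, State.init, isPlay_nil]
  | succ n ih =>
    rw [stateAt_succ, State.next, List.mem_append, List.mem_map] at hl
    obtain hl | ⟨p, hp, rfl⟩ := hl
    · exact ih hl
    obtain ⟨hslot, hsub⟩ := State.pieces_spec σ _ _ p hp
    obtain ⟨i, -, hi⟩ := List.mem_map.1 hslot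
    refine IsPlay.concat ?_ hsub
    rw [← hi, List.getD_eq_getElem?_getD]
    cases h : (stateAt σ W n).plays[i]? with
    | none => exact isPlay_nil
    | some l => exact ih (List.mem_of_getElem? h)

theorem exists_stage_subset_plays {Q : List (List (NonemptyOpen Y))}
    (hQ : ∀ l ∈ Q, ∃ n, l ∈ (stateAt σ W n).plays) :
    ∃ N, ∀ l ∈ Q, l ∈ (stateAt σ W N).plays := by
  induction Q with
  | nil => exact ⟨0, by simp⟩
  | cons l Q ih =>
    obtain ⟨n, hn⟩ := hQ l List.mem_cons_self
    obtain ⟨N, hN⟩ := ih fun l' hl' => hQ l' (.tail _ hl')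
    refine ⟨max n N, List.forall_mem_cons.2 ⟨?_, fun l' hl' => ?_⟩⟩
    · exact (plays_stateAt_prefix σ W (le_max_left n N)).subset hn
    · exact (plays_stateAt_prefix σ W (le_max_right n N)).subset (hN l' hl')

theorem exists_slots_stateAt_eq {Q : List (List (NonemptyOpen Y))} (hQ : Q ≠ [])
    (hmem : ∀ l ∈ Q, ∃ n, l ∈ (stateAt σ W n).plays) : ∃ N, (stateAt σ W N).slots = Q := by
  classical
  obtain ⟨N₀, hN₀⟩ := exists_stage_subset_plays σ W hmem
  obtain ⟨N, hN, hsched⟩ :=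
    exists_schedule_eq (l := Q.map ((stateAt σ W N₀).plays.idxOf ·)) (by simpa using hQ) N₀
  refine ⟨N, ?_⟩
  rw [State.slots, stage_stateAt, hsched, List.map_map]
  refine List.map_congr_left (fun l hl => ?_) |>.trans Q.map_id
  have hi := List.idxOf_lt_length_iff.2 (hN₀ l hl)
  have hpre := plays_stateAt_prefix σ W hN
  simp only [Function.comp_apply, List.getD_eq_getElem _ _ (hi.trans_le hpre.length_le), id]
  rw [← hpre.getElem hi, List.getElem_idxOf]

theorem exists_concat_mem_plays [T1Space Y] (hW : ∀ n, (W n).1 ⊆ (stateAt σ W n).target σ)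
    {L : List (Set Y)} (hL : L ≠ []) (hdisj : ∀ n, Disjoint (W n).1 (vietorisBasic L))
    (q : {U // U ∈ L} → List (NonemptyOpen Y)) (hq : ∀ U, ∃ n, q U ∈ (stateAt σ W n).plays) :
    ∃ (U : {U // U ∈ L}) (e : NonemptyOpen Y), Disjoint (e : Set Y) U ∧
      ∃ n, q U ++ [e] ∈ (stateAt σ W n).plays := by
  obtain ⟨N, hN⟩ := exists_slots_stateAt_eq σ W (Q := L.attach.map q) (by simpa using hL)
    fun l hl => by
      obtain ⟨U, -, rfl⟩ := List.mem_map.1 hl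
      exact hq U
  obtain ⟨hcover, hsub⟩ := State.pieces_spec_of_subset σ _ (hW N)
  obtain ⟨U, e, hmem, hUe⟩ := exists_disjoint_of_disjoint_vietorisBasic hL q
    (fun p hp => by simpa [hN, eq_comm] using (State.pieces_spec σ _ _ p hp).1)
    (fun U => hcover _ (by simp [hN]))
    ((hdisj N).mono_left hsub)
  refine ⟨U, e, hUe, N + 1, ?_⟩
  rw [stateAt_succ, State.next]
  exact List.mem_append_right _ (List.mem_map.2 ⟨_, hmem, rfl⟩)

theorem dense_iUnion_of_forall_subset_target [T1Space Y] (hσ : IsWinningStrategy σ)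
    (hW : ∀ n, (W n).1 ⊆ (stateAt σ W n).target σ) : Dense (⋃ n, (W n).1) := by
  refine dense_iff_inter_open.2 fun O hO ⟨F, hF⟩ => ?_
  by_contra hempty
  obtain ⟨L, hLo, hFL, hLO⟩ := exists_vietorisBasic_subset hO hF
  have hdisj (n : ℕ) : Disjoint (W n).1 (vietorisBasic L) :=
    Set.disjoint_left.2 fun G hGW hGL => hempty ⟨G, hLO hGL, Set.mem_iUnion.2 ⟨n, hGW⟩⟩
  obtain ⟨U, v, hv⟩ := exists_seq_ofFn_prefix_of_forall_exists_concat
    (S := fun U : {U // U ∈ L} =>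
      {l | (∃ n, l ∈ (stateAt σ W n).plays) ∧ ∀ e ∈ l, Disjoint (e : Set Y) U})
    (fun U => ⟨⟨0, List.mem_singleton_self _⟩, by simp⟩) fun q hq => by
      obtain ⟨U, e, hUe, hmem⟩ := exists_concat_mem_plays σ W hW
        (ne_nil_of_mem_vietorisBasic hFL) hdisj q fun U => (hq U).1
      refine ⟨U, e, hmem, fun e' he' => ?_⟩
      rcases List.mem_append.1 he' with he' | he'
      exacts [(hq U).2 e' he', List.eq_of_mem_singleton he' ▸ hUe]
  have hvU (n : ℕ) :
      Disjoint (v n : Set Y) U ∧ (v n : Set Y) ⊆ σ (List.ofFn fun i : Fin n => v i) := by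
    obtain ⟨l, ⟨⟨m, hlm⟩, hlU⟩, hvl⟩ := hv (n + 1)
    exact ⟨hlU _ (hvl.subset (List.mem_ofFn.2 ⟨Fin.last n, rfl⟩)),
      (isPlay_of_mem_plays σ W hlm).ofFn_subset hvl⟩
  obtain ⟨x, hxU, hxv⟩ := dense_iff_inter_open.1 (hσ v fun n => (hvU n).2) U (hLo U U.2)
    ((hFL.2 U U.2).mono Set.inter_subset_right)
  obtain ⟨n, hxn⟩ := Set.mem_iUnion.1 hxv
  exact Set.disjoint_left.1 (hvU n).1 hxn hxU

theorem isWinningStrategy_strategy [T1Space Y] (hσ : IsWinningStrategy σ) :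
    IsWinningStrategy (strategy σ) :=
  fun W hW => dense_iUnion_of_forall_subset_target σ W hσ hW

end OpenOpenGame

theorem iFavorable_hyperspace_of_iFavorable_general (Y : Type*) [TopologicalSpace Y]
    [T2Space Y] (h : IFavorable Y) :
    @IFavorable (HyperSpace Y) (vietorisTopology Y) :=
  let ⟨σ, hσ⟩ := h
  ⟨OpenOpenGame.strategy σ, OpenOpenGame.isWinningStrategy_strategy σ hσ⟩

/-- Kucharski–Plewik: if a compact Hausdorff space `Y` is I-favorable, then the hyperspace
`exp Y` with the Vietoris topology is I-favorable. -/
theorem iFavorable_hyperspace_of_iFavorable (Y : Type*) [TopologicalSpace Y]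
    [CompactSpace Y] [T2Space Y] (h : IFavorable Y) :
    @IFavorable (HyperSpace Y) (vietorisTopology Y) :=
  iFavorable_hyperspace_of_iFavorable_general Y h
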